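/- Let s be a positive integer, N ≥ 3 an integer, and for 1 ≤ m ≤ N+1 set R_N(m) := ⌊(N+1−m)/2⌋ and C_N^{[4]}(s) := max_{1≤m≤N+1} |binom(−m/2, R_N(m)+1)|·s^{R_N(m)+1}. Then for every integer m with 1 ≤ m ≤ N+1 and every integer n > s(N+5)/4 one has |(n+s)^{−m/2} − Σ_{ℓ=0}^{R_N(m)} binom(−m/2, ℓ)·s^ℓ·n^{−ℓ−m/2}| ≤ C_N^{[4]}(s) · n^{−(N+2)/2}. -/

import Mathlib

open Real Finset

/-- Generalized binomial coefficient `binom(α, m) = α(α−1)⋯(α−m+1)/m!`. -/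
noncomputable def genBinom (α : ℝ) (m : ℕ) : ℝ :=
  (∏ i ∈ Finset.range m, (α - i)) / (Nat.factorial m : ℝ)

lemma iter_rpow {a b : ℝ} (ha : 0 < a) (hab : a < b) (α : ℝ) (k : ℕ) :
    ∀ t ∈ Set.Icc a b, iteratedDerivWithin k (fun t : ℝ => t ^ α) (Set.Icc a b) t
      = (∏ i ∈ Finset.range k, (α - i)) * t ^ (α - k) := by
  induction k with
  | zero => intro t ht; simp
  | succ k ih =>
    intro t ht
    have hud : UniqueDiffOn ℝ (Set.Icc a b) := uniqueDiffOn_Icc hab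
    rw [iteratedDerivWithin_succ]
    rw [derivWithin_congr ih (ih t ht)]
    have htne : t ≠ 0 := (lt_of_lt_of_le ha ht.1).ne'
    have hd : HasDerivAt (fun t : ℝ => (∏ i ∈ Finset.range k, (α - i)) * t ^ (α - k))
        ((∏ i ∈ Finset.range k, (α - i)) * ((α - k) * t ^ (α - k - 1))) t :=
      (Real.hasDerivAt_rpow_const (Or.inl htne)).const_mul _
    rw [(hd.hasDerivWithinAt).derivWithin (hud t ht)]
    rw [Finset.prod_range_succ, show α - (k:ℝ) - 1 = α - ((k:ℕ)+1 : ℕ) by push_cast; ring]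
    ring

theorem stmt17 :
    ∀ s : ℕ, 0 < s → ∀ N : ℕ, 3 ≤ N →
      ∀ m : ℕ, 1 ≤ m → m ≤ N + 1 →
        ∀ n : ℕ, (s:ℝ) * ((N:ℝ) + 5) / 4 < (n:ℝ) →
          |((n:ℝ) + s) ^ (-((m:ℝ)/2)) -
              ∑ ℓ ∈ Finset.range ((N + 1 - m) / 2 + 1),
                genBinom (-(m:ℝ)/2) ℓ * (s:ℝ) ^ ℓ * (n:ℝ) ^ (-(ℓ:ℝ) - (m:ℝ)/2)| ≤
            ((Finset.Icc 1 (N + 1)).sup' (Finset.nonempty_Icc.mpr (by omega))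
                (fun k => |genBinom (-(k:ℝ)/2) ((N + 1 - k) / 2 + 1)| *
                  (s:ℝ) ^ ((N + 1 - k) / 2 + 1))) *
              (n:ℝ) ^ (-(((N:ℝ) + 2) / 2)) := by
  intro s hs N hN m hm1 hm2 n hn
  set α : ℝ := -(m:ℝ)/2 with hα
  set R : ℕ := (N + 1 - m) / 2 with hR
  have hs1 : (1:ℝ) ≤ (s:ℝ) := by exact_mod_cast hs
  have hN3 : (3:ℝ) ≤ (N:ℝ) := by exact_mod_cast hN
  have h8 : (8:ℝ) ≤ (s:ℝ) * ((N:ℝ) + 5) := by nlinarith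
  have hn2 : (2:ℝ) < (n:ℝ) := by linarith
  have hn0 : (0:ℝ) < (n:ℝ) := by linarith
  have hn1 : (1:ℝ) ≤ (n:ℝ) := by linarith
  have hab : (n:ℝ) < (n:ℝ) + s := by linarith
  set f : ℝ → ℝ := fun t => t ^ α with hf
  set I : Set ℝ := Set.Icc (n:ℝ) ((n:ℝ) + s) with hI
  have hmemI : ∀ t ∈ I, (0:ℝ) < t := fun t ht => lt_of_lt_of_le hn0 ht.1
  have hiter := iter_rpow hn0 hab α
  -- ContDiffOn
  have hcd : ContDiffOn ℝ R f I := fun t ht =>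
    (Real.contDiffAt_rpow_const_of_ne (hmemI t ht).ne').contDiffWithinAt
  -- DifferentiableOn of iterated deriv on Ioo
  have hdiff : DifferentiableOn ℝ (iteratedDerivWithin R f I) (Set.Ioo (n:ℝ) ((n:ℝ)+s)) := by
    have : DifferentiableOn ℝ
        (fun t : ℝ => (∏ i ∈ Finset.range R, (α - i)) * t ^ (α - R))
        (Set.Ioo (n:ℝ) ((n:ℝ)+s)) := by
      intro t ht
      exact (((Real.hasDerivAt_rpow_const
        (Or.inl (lt_of_lt_of_le hn0 ht.1.le).ne')).differentiableAt).const_mul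
        _).differentiableWithinAt
    exact this.congr fun t ht => hiter R t ⟨ht.1.le, ht.2.le⟩
  obtain ⟨x', hx', heq⟩ := taylor_mean_remainder_lagrange hab.ne
    (by rw [Set.uIcc_of_le hab.le]; exact hcd)
    (by rw [Set.uIcc_of_le hab.le, Set.uIoo_of_le hab.le]; exact hdiff)
  rw [Set.uIoo_of_le hab.le] at hx'
  rw [Set.uIcc_of_le hab.le, ← hI] at heq
  have hx'pos : (0:ℝ) < x' := lt_trans hn0 hx'.1
  -- Taylor polynomial equals the sum in the statement
  have hsum : taylorWithinEval f R I (n:ℝ) ((n:ℝ)+s)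
      = ∑ ℓ ∈ Finset.range (R + 1),
          genBinom α ℓ * (s:ℝ) ^ ℓ * (n:ℝ) ^ (-(ℓ:ℝ) - (m:ℝ)/2) := by
    rw [taylor_within_apply]
    refine Finset.sum_congr rfl fun k _ => ?_
    rw [hiter k (n:ℝ) ⟨le_refl _, hab.le⟩]
    have he : α - (k:ℝ) = -(k:ℝ) - (m:ℝ)/2 := by rw [hα]; ring
    rw [he, genBinom, smul_eq_mul]
    have : ((n:ℝ) + s - n) = (s:ℝ) := by ring
    rw [this]
    field_simp
  have hfx : ((n:ℝ) + s) ^ (-((m:ℝ)/2)) = f ((n:ℝ)+s) := by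
    rw [hf, hα, neg_div]
  rw [hfx, ← hsum, heq]
  -- rewrite iterated deriv at x'
  rw [hiter (R+1) x' ⟨hx'.1.le, hx'.2.le⟩]
  have hss : ((n:ℝ) + s - n) = (s:ℝ) := by ring
  rw [hss]
  have hfact : (0:ℝ) < (Nat.factorial (R+1) : ℝ) := by positivity
  have habs : |(∏ i ∈ Finset.range (R+1), (α - i)) * x' ^ (α - (R+1:ℕ)) * (s:ℝ) ^ (R+1) /
      (Nat.factorial (R+1) : ℝ)| = (|genBinom α (R+1)| * (s:ℝ) ^ (R+1)) * x' ^ (α - (R+1:ℕ)) := by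
    rw [abs_div, abs_mul, abs_mul, genBinom, abs_div,
      abs_of_pos (Real.rpow_pos_of_pos hx'pos _),
      abs_of_nonneg (pow_nonneg (Nat.cast_nonneg s : (0:ℝ) ≤ (s:ℝ)) (R+1)),
      abs_of_pos hfact]
    ring
  rw [habs]
  -- bound the rpow part
  have hexp : α - ((R:ℝ)+1) ≤ -(((N:ℝ) + 2) / 2) := by
    have hnat : N ≤ m + 2 * R := by omega
    have : (N:ℝ) ≤ (m:ℝ) + 2 * (R:ℝ) := by exact_mod_cast hnat
    rw [hα]; linarith
  have h1 : x' ^ (α - (R+1:ℕ)) ≤ (n:ℝ) ^ (α - (R+1:ℕ)) := by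
    apply Real.rpow_le_rpow_of_nonpos hn0 hx'.1.le
    push_cast
    have : -(((N:ℝ) + 2) / 2) ≤ 0 := by
      have : (0:ℝ) ≤ (N:ℝ) := Nat.cast_nonneg N
      linarith
    linarith [hexp]
  have h2 : (n:ℝ) ^ (α - (R+1:ℕ)) ≤ (n:ℝ) ^ (-(((N:ℝ) + 2) / 2)) := by
    apply Real.rpow_le_rpow_of_exponent_le hn1
    push_cast; exact hexp
  have h3 : |genBinom α (R+1)| * (s:ℝ) ^ (R+1) ≤
      (Finset.Icc 1 (N + 1)).sup' (Finset.nonempty_Icc.mpr (by omega))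
        (fun k => |genBinom (-(k:ℝ)/2) ((N + 1 - k) / 2 + 1)| *
          (s:ℝ) ^ ((N + 1 - k) / 2 + 1)) := by
    have hmem : m ∈ Finset.Icc 1 (N+1) := Finset.mem_Icc.mpr ⟨hm1, hm2⟩
    exact Finset.le_sup' (fun k : ℕ => |genBinom (-(k:ℝ)/2) ((N + 1 - k) / 2 + 1)| *
      (s:ℝ) ^ ((N + 1 - k) / 2 + 1)) hmem
  calc |genBinom α (R+1)| * (s:ℝ) ^ (R+1) * x' ^ (α - (R+1:ℕ))
      ≤ |genBinom α (R+1)| * (s:ℝ) ^ (R+1) * (n:ℝ) ^ (-(((N:ℝ) + 2) / 2)) := by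
        apply mul_le_mul_of_nonneg_left (h1.trans h2) (by positivity)
    _ ≤ _ := by
        apply mul_le_mul_of_nonneg_right h3 (Real.rpow_nonneg hn0.le _)
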